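/- Every equilibrium graph in the max-distance network creation game has no cycle of length less than 2α − 1. -/

import Mathlib

/-!
Max-distance network creation game (Demaine et al.):
`n` agents, agent `v` buys edges to the agents in `s v`, each at cost `α`.
The resulting graph has an edge `(u,v)` iff `u ∈ s v` or `v ∈ s u`.
Agent `v`'s cost is `α * |s v|` plus its eccentricity (max distance, `⊤` if
disconnected). A profile is a (pure Nash) equilibrium if no agent can strictly
decrease its cost by unilaterally changing its edge set.
-/

open SimpleGraph
open scoped ENNReal

namespace NCG

/-- The undirected graph created by strategy profile `s`. -/
def graph (n : ℕ) (s : Fin n → Finset (Fin n)) : SimpleGraph (Fin n) :=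
  SimpleGraph.fromRel (fun u v => v ∈ s u)

/-- Eccentricity `D(v) = max_u d_G(v,u)`, valued in `ℕ∞`. -/
noncomputable def ecc {n : ℕ} (G : SimpleGraph (Fin n)) (v : Fin n) : ℕ∞ :=
  ⨆ u, G.edist v u

/-- The cost of agent `v` under profile `s`: `α·|s v| + D(v)` (infinite if the
graph is disconnected). -/
noncomputable def cost {n : ℕ} (α : ℝ) (s : Fin n → Finset (Fin n)) (v : Fin n) : ℝ≥0∞ :=
  ENNReal.ofReal α * (s v).card + (ecc (graph n s) v : ℝ≥0∞)

/-- Pure Nash equilibrium: no agent can strictly decrease its cost by a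
unilateral deviation. -/
def IsEquilibrium {n : ℕ} (α : ℝ) (s : Fin n → Finset (Fin n)) : Prop :=
  ∀ (v : Fin n) (t : Finset (Fin n)), cost α s v ≤ cost α (Function.update s v t) v

/-- Radius `rad(G) = min_v D(v)`. -/
noncomputable def radius {n : ℕ} (G : SimpleGraph (Fin n)) : ℕ∞ :=
  ⨅ v, ecc G v

/-- Diameter `diam(G) = max_v D(v)`. -/
noncomputable def diam {n : ℕ} (G : SimpleGraph (Fin n)) : ℕ∞ :=
  ⨆ v, ecc G v

/-- Interpret an extended natural number as a real number (`⊤ ↦ 0`). -/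
noncomputable def entoR (x : ℕ∞) : ℝ := ((x : ℝ≥0∞)).toReal

/-- `T` is a shortest path tree of `G` rooted at `b`: a spanning tree of `G`
preserving all distances from `b`. -/
def IsSPT {n : ℕ} (G T : SimpleGraph (Fin n)) (b : Fin n) : Prop :=
  T ≤ G ∧ T.IsTree ∧ ∀ v, T.edist b v = G.edist b v

/-- `p` is the parent of `a` in the tree `T` rooted at `b`. -/
def IsParent {n : ℕ} (T : SimpleGraph (Fin n)) (b a p : Fin n) : Prop :=
  T.Adj a p ∧ T.edist b p + 1 = T.edist b a

/-- The vertex set `B` (with more than two vertices) induces a biconnected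
subgraph: removing any single vertex leaves it connected. -/
def IsBiconnected {n : ℕ} (G : SimpleGraph (Fin n)) (B : Finset (Fin n)) : Prop :=
  2 < B.card ∧ ∀ v ∈ B, (G.induce ((B : Set (Fin n)) \ {v})).Connected

/-- `B` is (the vertex set of) a biconnected component of `G`: a maximal
biconnected subgraph with more than two vertices. -/
def IsBicomp {n : ℕ} (G : SimpleGraph (Fin n)) (B : Finset (Fin n)) : Prop :=
  IsBiconnected G B ∧ ∀ B' : Finset (Fin n), B ⊆ B' → IsBiconnected G B' → B' = B

/-- The induced subgraph of `G` on the vertex set `B`. -/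
def Hgraph {n : ℕ} (G : SimpleGraph (Fin n)) (B : Finset (Fin n)) :
    SimpleGraph ((B : Set (Fin n))) :=
  G.induce (B : Set (Fin n))

/-- The degree of `v` inside the induced subgraph on `B`. -/
noncomputable def degH {n : ℕ} (G : SimpleGraph (Fin n)) (B : Finset (Fin n)) (v : Fin n) : ℕ :=
  {u : Fin n | u ∈ B ∧ G.Adj v u}.ncard

/-- A min cycle: a cycle whose internal (cycle) distances agree with the
distances in `G`, i.e. an isometric cycle. -/
def IsMinCycle {n : ℕ} (G : SimpleGraph (Fin n)) {v : Fin n} (c : G.Walk v v) : Prop :=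
  c.IsCycle ∧ ∀ x₁ ∈ c.support, ∀ x₂ ∈ c.support,
    c.toSubgraph.spanningCoe.edist x₁ x₂ = G.edist x₁ x₂

/-- A directed cycle: going around the cycle, each vertex buys the edge to its
successor (in one of the two cyclic orientations). -/
def IsDirectedCycle {n : ℕ} (s : Fin n → Finset (Fin n)) {v : Fin n}
    (c : (graph n s).Walk v v) : Prop :=
  (∀ d ∈ c.darts, d.toProd.2 ∈ s d.toProd.1) ∨ (∀ d ∈ c.darts, d.toProd.1 ∈ s d.toProd.2)

/-- A shopping vertex of the biconnected component `B` w.r.t. the shortest path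
tree `T`: a vertex of `B` buying an edge of the component that is not in `T`. -/
def IsShopping {n : ℕ} (s : Fin n → Finset (Fin n)) (T : SimpleGraph (Fin n))
    (B : Finset (Fin n)) (u : Fin n) : Prop :=
  u ∈ B ∧ ∃ w ∈ B, w ∈ s u ∧ (graph n s).Adj u w ∧ ¬ T.Adj u w

/-- The social cost of profile `s`. -/
noncomputable def socialCost {n : ℕ} (α : ℝ) (s : Fin n → Finset (Fin n)) : ℝ≥0∞ :=
  ∑ v, cost α s v

end NCG

open NCG

/-!
Let `C` be a shortest cycle of an equilibrium graph, of length `k`. An arc of `C` of length at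
most `k / 2` is a shortest path, since a shorter path would close a shorter cycle.

Let `u` be a vertex of `C` of maximal eccentricity. If `u` buys a cycle edge `uw`, it may delete
it: distances from the vertex `z` of `C` opposite to `u` do not grow (a shortest path from `z`
through `uw` can be rerouted along an arc of `C`), and `u` still reaches `z` in `⌊k/2⌋` steps;
as `D(z) ≤ D(u)`, the eccentricity of `u` grows by at most `⌊k/2⌋`. Otherwise both cycle
neighbours of `u` buy their edge to `u`, so going around `C` the buyer of consecutive edges
switches from head to tail somewhere: some vertex `v` buys both of its cycle edges. Then `v` may
swap them for a single edge to the middle of the opposite arc, which increases `D(v)` by at most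
`⌈k/2⌉ - 1`. Either way equilibrium forces `α ≤ k / 2`.
-/

namespace SimpleGraph

variable {V : Type*} {G G' : SimpleGraph V}

lemma egirth_le_length_add_length {x y : V} {p q : G.Walk x y} (hp : p.IsPath) (hq : q.IsPath)
    (hpq : p ≠ q) : G.egirth ≤ p.length + q.length := by
  classical
  set H := fromEdgeSet {e | e ∈ p.edges ∨ e ∈ q.edges}
  have hpH : ∀ e ∈ p.edges, e ∈ H.edgeSet := fun e he => by
    rw [edgeSet_fromEdgeSet]
    exact ⟨Or.inl he, G.not_isDiag_of_mem_edgeSet (p.edges_subset_edgeSet he)⟩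
  have hqH : ∀ e ∈ q.edges, e ∈ H.edgeSet := fun e he => by
    rw [edgeSet_fromEdgeSet]
    exact ⟨Or.inr he, G.not_isDiag_of_mem_edgeSet (q.edges_subset_edgeSet he)⟩
  have hHG : H ≤ G := fun a b hab => hab.1.elim p.adj_of_mem_edges q.adj_of_mem_edges
  have hH : ¬ H.IsAcyclic := fun hacyc => hpq <| by
    have := congrArg (fun r : H.Path x y => (r : H.Walk x y).transfer G fun _ he =>
        edgeSet_mono hHG ((r : H.Walk x y).edges_subset_edgeSet he)) <|
      (isAcyclic_iff_subsingleton_path.mp hacyc x y).elim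
        ⟨p.transfer H hpH, hp.transfer hpH⟩ ⟨q.transfer H hqH, hq.transfer hqH⟩
    simpa [Walk.transfer_transfer, Walk.transfer_self] using this
  obtain ⟨a, c, hc, hlen⟩ := exists_egirth_eq_length.mpr hH
  have hsub : c.edges.Subperm (p.edges ++ q.edges) :=
    List.subperm_of_subset hc.edges_nodup fun e he => by
      have := c.edges_subset_edgeSet he
      rw [edgeSet_fromEdgeSet] at this
      exact List.mem_append.mpr this.1
  have := hsub.length_le
  simp only [Walk.length_edges, List.length_append] at this
  calc G.egirth ≤ H.egirth := egirth_anti hHG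
    _ = c.length := hlen
    _ ≤ p.length + q.length := by exact_mod_cast this

lemma Walk.IsPath.length_le_edist_of_two_mul_le_egirth {x y : V} {p : G.Walk x y}
    (hp : p.IsPath) (h : 2 * (p.length : ℕ∞) ≤ G.egirth) : (p.length : ℕ∞) ≤ G.edist x y := by
  classical
  by_contra! hlt
  obtain ⟨q, hq⟩ := exists_walk_of_edist_ne_top (hlt.trans (ENat.natCast_lt_top _)).ne
  have hlen : q.bypass.length < p.length := by
    rw [← hq] at hlt
    exact q.length_bypass_le_length.trans_lt (by exact_mod_cast hlt)
  have hsum := egirth_le_length_add_length hp q.bypass_isPath (by rintro rfl; omega)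
  have : (p.length : ℕ∞) + q.bypass.length < 2 * p.length := by
    rw [two_mul]; exact_mod_cast (by omega : p.length + q.bypass.length < p.length + p.length)
  exact (h.trans hsum).not_gt this

lemma edist_le_edist_add_of_forall_walk {x z : V} {D : ℕ∞}
    (h : ∀ p : G.Walk x z, G'.edist x z ≤ p.length + D) : G'.edist x z ≤ G.edist x z + D := by
  by_cases hr : G.Reachable x z
  · obtain ⟨p, hp⟩ := hr.exists_walk_length_eq_edist
    exact hp ▸ h p
  · simp [edist_eq_top_of_not_reachable hr]

lemma edist_le_length_of_deleteEdges_le {S : Set (Sym2 V)} {x y : V} (hG : G.deleteEdges S ≤ G')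
    (p : G.Walk x y) (hp : ∀ e ∈ p.edges, e ∉ S) : G'.edist x y ≤ p.length :=
  (edist_anti hG).trans ((p.toDeleteEdges S hp).edist_le.trans (by simp))

lemma edist_le_length_of_deleteIncidenceSet_le {v x y : V} (hG : G.deleteIncidenceSet v ≤ G')
    (p : G.Walk x y) (hp : v ∉ p.support) : G'.edist x y ≤ p.length :=
  edist_le_length_of_deleteEdges_le hG p fun e he hve => hp <| by
    obtain ⟨b, rfl⟩ := Sym2.mem_iff_exists.mp hve.2
    exact p.fst_mem_support_of_mem_edges he

lemma edist_le_edist_of_deleteEdges_le {u w z : V} (hG : G.deleteEdges {s(u, w)} ≤ G')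
    (hu : G'.edist z u ≤ G.edist z w + 1) (hw : G'.edist z w ≤ G.edist z u + 1) (x : V) :
    G'.edist z x ≤ G.edist z x := by
  rw [edist_comm, edist_comm (G := G)] at *
  simpa using edist_le_edist_add_of_forall_walk (D := 0) fun p => by
    induction p with
    | nil => simp
    | @cons x y z hxy p ih =>
      rw [Walk.length_cons, Nat.cast_add, Nat.cast_one, add_zero] at *
      by_cases he : s(x, y) = s(u, w)
      · rcases Sym2.eq_iff.mp he with ⟨rfl, rfl⟩ | ⟨rfl, rfl⟩
        · exact hu.trans (by gcongr; exact p.edist_le)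
        · exact hw.trans (by gcongr; exact p.edist_le)
      · calc G'.edist x z ≤ G'.edist x y + G'.edist y z := G'.edist_triangle
          _ ≤ 1 + p.length := by
            gcongr
            · exact (edist_eq_one_iff_adj.mpr (hG (deleteEdges_adj.mpr ⟨hxy, he⟩))).le
            · exact ih hu hw
          _ = p.length + 1 := add_comm _ _

lemma edist_le_edist_add_of_deleteIncidenceSet_le {u : V} {D : ℕ∞}
    (hG : G.deleteIncidenceSet u ≤ G') (hN : ∀ y, G.Adj u y → G'.edist u y ≤ D + 1) (x : V) :
    G'.edist u x ≤ G.edist u x + D := by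
  rw [edist_comm, edist_comm (G := G)]
  refine edist_le_edist_add_of_forall_walk fun p => ?_
  induction p with
  | nil => simp
  | @cons x y u hxy p ih =>
    by_cases hx : x = u
    · simp [hx]
    by_cases hy : y = u
    · subst hy
      calc G'.edist x y ≤ D + 1 := edist_comm.trans_le (hN x hxy.symm)
        _ ≤ ↑(p.length + 1) + D := by
          rw [add_comm D]; gcongr; exact_mod_cast Nat.le_add_left 1 _
    · calc G'.edist x u ≤ G'.edist x y + G'.edist y u := G'.edist_triangle
        _ ≤ 1 + (p.length + D) := by
          gcongr
          · exact (edist_eq_one_iff_adj.mpr (hG (deleteIncidenceSet_adj.mpr ⟨hxy, hx, hy⟩))).le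
          · exact ih hG hN
        _ = ↑(p.length + 1) + D := by push_cast; ring

lemma Walk.IsCycle.edist_le_of_deleteEdges_le {u w : V} {huw : G.Adj u w} {p : G.Walk w u}
    (hc : (Walk.cons huw p).IsCycle) (hgirth : ((p.length + 1 : ℕ) : ℕ∞) ≤ G.egirth)
    (hG : G.deleteEdges {s(u, w)} ≤ G') :
    G'.edist u (p.getVert (p.length / 2)) ≤ (p.length - p.length / 2 : ℕ) ∧
      ∀ x, G'.edist (p.getVert (p.length / 2)) x ≤ G.edist (p.getVert (p.length / 2)) x := by
  obtain ⟨hp, hpe⟩ := (Walk.cons_isCycle_iff p huw).mp hc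
  set L := p.length
  set j := L / 2
  set z := p.getVert j
  have hA : (p.take j).length = j := by simp [Walk.take_length]; omega
  have hB : (p.drop j).length = L - j := Walk.drop_length p j
  have hA' : G'.edist z w ≤ j := by
    rw [edist_comm]
    refine hA ▸ edist_le_length_of_deleteEdges_le hG _ fun e he h => ?_
    rw [Walk.edges_take] at he
    exact hpe (Set.mem_singleton_iff.mp h ▸ List.mem_of_mem_take he)
  have hB' : G'.edist z u ≤ (L - j : ℕ) := hB ▸ edist_le_length_of_deleteEdges_le hG _
    fun e he h => by
      rw [Walk.edges_drop] at he
      exact hpe (Set.mem_singleton_iff.mp h ▸ List.mem_of_mem_drop he)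
  have hAG : (j : ℕ∞) ≤ G.edist z w := by
    rw [edist_comm]
    exact hA ▸ (hp.take j).length_le_edist_of_two_mul_le_egirth
      (le_trans (by rw [hA]; exact_mod_cast (by omega : 2 * j ≤ L + 1)) hgirth)
  have hBG : ((L - j : ℕ) : ℕ∞) ≤ G.edist z u :=
    hB ▸ (hp.drop j).length_le_edist_of_two_mul_le_egirth
      (le_trans (by rw [hB]; exact_mod_cast (by omega : 2 * (L - j) ≤ L + 1)) hgirth)
  -- the two arcs of the cycle from `z` are shortest paths whose lengths differ by at most one
  refine ⟨edist_comm.trans_le hB', edist_le_edist_of_deleteEdges_le hG ?_ ?_⟩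
  · calc G'.edist z u ≤ (L - j : ℕ) := hB'
      _ ≤ (j : ℕ∞) + 1 := by exact_mod_cast (by omega : L - j ≤ j + 1)
      _ ≤ G.edist z w + 1 := by gcongr
  · calc G'.edist z w ≤ j := hA'
      _ ≤ ((L - j : ℕ) : ℕ∞) + 1 := by exact_mod_cast (by omega : j ≤ L - j + 1)
      _ ≤ G.edist z u + 1 := by gcongr

lemma edist_le_of_adj_getVert_length_div_two {v x y : V} {P : G.Walk x y} (hv : v ∉ P.support)
    (hG : G.deleteIncidenceSet v ≤ G') (hadj : G'.Adj v (P.getVert (P.length / 2))) :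
    G'.edist v x ≤ (P.length - P.length / 2 : ℕ) + 1 ∧
      G'.edist v y ≤ (P.length - P.length / 2 : ℕ) + 1 := by
  set L := P.length
  set j := L / 2
  set z := P.getVert j
  have hvz : G'.edist v z ≤ 1 := (edist_eq_one_iff_adj.mpr hadj).le
  have hA : G'.edist z x ≤ j := by
    have := edist_le_length_of_deleteIncidenceSet_le hG (P.take j) fun h =>
      hv (List.mem_of_mem_take (Walk.support_take P j ▸ h))
    rwa [Walk.take_length, min_eq_left (by omega), edist_comm] at this
  have hB : G'.edist z y ≤ (L - j : ℕ) := by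
    have := edist_le_length_of_deleteIncidenceSet_le hG (P.drop j) fun h =>
      hv (List.mem_of_mem_drop (Walk.drop_support_eq_support_drop_min P j ▸ h))
    rwa [← Walk.drop_length]
  constructor
  · calc G'.edist v x ≤ G'.edist v z + G'.edist z x := G'.edist_triangle
      _ ≤ 1 + j := add_le_add hvz hA
      _ ≤ (L - j : ℕ) + 1 := by rw [add_comm]; gcongr; exact_mod_cast (by omega : j ≤ L - j)
  · exact G'.edist_triangle.trans ((add_le_add hvz hB).trans_eq (add_comm _ _))

namespace Walk

variable {u : V} {c : G.Walk u u}

lemma IsCycle.dart_eq_of_fst_eq (hc : c.IsCycle) {d d' : G.Dart} (hd : d ∈ c.darts)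
    (hd' : d' ∈ c.darts) (h : d.fst = d'.fst) : d = d' :=
  List.inj_on_of_nodup_map (c.map_fst_darts ▸ hc.nodup_dropLast_support) hd hd' h

lemma IsCycle.dart_eq_of_snd_eq (hc : c.IsCycle) {d d' : G.Dart} (hd : d ∈ c.darts)
    (hd' : d' ∈ c.darts) (h : d.snd = d'.snd) : d = d' :=
  List.inj_on_of_nodup_map (c.map_snd_darts ▸ hc.support_nodup) hd hd' h

lemma IsCycle.snd_rotate [DecidableEq V] (hc : c.IsCycle) {v : V} (hv : v ∈ c.support)
    {d : G.Dart} (hd : d ∈ c.darts) (hdv : d.fst = v) : (c.rotate v hv).snd = d.snd := by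
  have hc' := hc.rotate hv
  exact congrArg (·.snd) <| hc'.dart_eq_of_fst_eq (firstDart_mem_darts hc'.not_nil)
    ((c.rotate_darts v hv).mem_iff.mpr hd) hdv.symm

lemma IsCycle.penultimate_rotate [DecidableEq V] (hc : c.IsCycle) {v : V} (hv : v ∈ c.support)
    {d : G.Dart} (hd : d ∈ c.darts) (hdv : d.snd = v) : (c.rotate v hv).penultimate = d.fst := by
  have hc' := hc.rotate hv
  exact congrArg (·.fst) <| hc'.dart_eq_of_snd_eq (lastDart_mem_darts hc'.not_nil)
    ((c.rotate_darts v hv).mem_iff.mpr hd) hdv.symm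

lemma IsCycle.exists_walk_snd_penultimate (hc : c.IsCycle) :
    ∃ P : G.Walk c.snd c.penultimate, u ∉ P.support ∧ P.length + 2 = c.length := by
  have h3 := hc.three_le_length
  have hnil : ¬ c.dropLast.Nil := by rw [← length_eq_zero_iff, length_dropLast]; omega
  refine ⟨c.dropLast.tail.copy (getVert_dropLast (by omega)) rfl, ?_, by simp; omega⟩
  have hnd := hc.isPath_dropLast.support_nodup
  rw [← c.dropLast.cons_support_tail hnil] at hnd
  simpa using (List.nodup_cons.mp hnd).1

end Walk

end SimpleGraph

namespace NCG

open SimpleGraph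

variable {n : ℕ} {α : ℝ} {s : Fin n → Finset (Fin n)}

lemma graph_adj {x y : Fin n} : (graph n s).Adj x y ↔ x ≠ y ∧ (y ∈ s x ∨ x ∈ s y) :=
  fromRel_adj _ _ _

lemma graph_update_adj_of_mem {v x : Fin n} {t : Finset (Fin n)} (hx : x ∈ t) (hvx : v ≠ x) :
    (graph n (Function.update s v t)).Adj v x :=
  graph_adj.mpr ⟨hvx, .inl (by simpa)⟩

lemma deleteIncidenceSet_le_graph_update (v : Fin n) (t : Finset (Fin n)) :
    (graph n s).deleteIncidenceSet v ≤ graph n (Function.update s v t) := fun x y h => by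
  obtain ⟨hxy, hx, hy⟩ := deleteIncidenceSet_adj.mp h
  simpa [graph_adj, Function.update_of_ne hx, Function.update_of_ne hy] using graph_adj.mp hxy

lemma deleteEdges_le_graph_update_erase (v w : Fin n) :
    (graph n s).deleteEdges {s(v, w)} ≤ graph n (Function.update s v ((s v).erase w)) := by
  have hbuy : ∀ a b, b ∈ s a → s(a, b) ≠ s(v, w) → b ∈ Function.update s v ((s v).erase w) a := by
    intro a b hb hab
    rcases eq_or_ne a v with rfl | ha
    · simp only [Function.update_self, Finset.mem_erase, hb, and_true]
      rintro rfl
      exact hab rfl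
    · simpa [Function.update_of_ne ha]
  intro x y h
  obtain ⟨hxy, he⟩ := deleteEdges_adj.mp h
  rw [Set.mem_singleton_iff] at he
  obtain ⟨hne, hxy⟩ := graph_adj.mp hxy
  exact graph_adj.mpr ⟨hne, hxy.imp (hbuy x y · he) (hbuy y x · (by rwa [Sym2.eq_swap]))⟩

lemma edist_le_ecc (G : SimpleGraph (Fin n)) (v u : Fin n) : G.edist v u ≤ ecc G v :=
  le_iSup (G.edist v) u

lemma ecc_le_iff {G : SimpleGraph (Fin n)} {v : Fin n} {D : ℕ∞} :
    ecc G v ≤ D ↔ ∀ u, G.edist v u ≤ D :=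
  iSup_le_iff

lemma ecc_le_ecc_add_of_forall_edist_le {G G' : SimpleGraph (Fin n)} {v : Fin n} {D : ℕ∞}
    (h : ∀ x, G'.edist v x ≤ G.edist v x + D) : ecc G' v ≤ ecc G v + D :=
  ecc_le_iff.mpr fun x => (h x).trans (by gcongr; exact edist_le_ecc G v x)

lemma ecc_le_ecc_add_of_edist_le {G G' : SimpleGraph (Fin n)} {u z : Fin n} {D : ℕ∞}
    (huz : G'.edist u z ≤ D) (hz : ∀ x, G'.edist z x ≤ G.edist z x) (hzu : ecc G z ≤ ecc G u) :
    ecc G' u ≤ ecc G u + D :=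
  ecc_le_iff.mpr fun x => calc
    G'.edist u x ≤ G'.edist u z + G'.edist z x := G'.edist_triangle
    _ ≤ D + ecc G u := add_le_add huz (((hz x).trans (edist_le_ecc G z x)).trans hzu)
    _ = ecc G u + D := add_comm _ _

theorem IsEquilibrium.ecc_ne_top (hs : IsEquilibrium α s) (v : Fin n) :
    ecc (graph n s) v ≠ ⊤ := by
  have hecc : ecc (graph n (Function.update s v Finset.univ)) v ≤ 1 := ecc_le_iff.mpr fun u => by
    rcases eq_or_ne v u with rfl | hvu
    · simp
    · exact (edist_eq_one_iff_adj.mpr (graph_update_adj_of_mem (Finset.mem_univ u) hvu)).le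
  have hfin : cost α (Function.update s v Finset.univ) v ≠ ⊤ := by
    refine ENNReal.add_ne_top.mpr ⟨ENNReal.mul_ne_top ENNReal.ofReal_ne_top (by simp), ?_⟩
    exact ENat.toENNReal_ne_top.mpr (ne_top_of_le_ne_top ENat.one_ne_top hecc)
  intro htop
  refine hfin (top_le_iff.mp ?_)
  calc ⊤ = cost α s v := by simp [cost, htop]
    _ ≤ _ := hs v Finset.univ

theorem IsEquilibrium.le_of_ecc_update_le (hs : IsEquilibrium α s) {v : Fin n}
    {t : Finset (Fin n)} (hcard : t.card < (s v).card) {D : ℕ}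
    (hecc : ecc (graph n (Function.update s v t)) v ≤ ecc (graph n s) v + D) : α ≤ D := by
  rcases le_or_gt α 0 with hα | hα
  · exact hα.trans D.cast_nonneg
  obtain ⟨e, he⟩ := ENat.ne_top_iff_exists.mp (hs.ecc_ne_top v)
  obtain ⟨e', he'⟩ := ENat.ne_top_iff_exists.mp (ne_top_of_le_ne_top (by simp [← he]) hecc)
  have hee' : e' ≤ e + D := by exact_mod_cast he' ▸ he ▸ hecc
  have h := hs v t
  simp only [cost, Function.update_self, ← he, ← he'] at h
  have hreal : ∀ c f : ℕ, ENNReal.ofReal α * c + ((f : ℕ∞) : ℝ≥0∞) = ENNReal.ofReal (α * c + f) := by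
    intro c f
    rw [ENNReal.ofReal_add (by positivity) (by positivity), ENNReal.ofReal_mul hα.le]
    simp
  rw [hreal, hreal, ENNReal.ofReal_le_ofReal_iff (by positivity)] at h
  have : (t.card : ℝ) + 1 ≤ (s v).card := by exact_mod_cast hcard
  have : (e' : ℝ) ≤ e + D := by exact_mod_cast hee'
  nlinarith

theorem IsEquilibrium.two_mul_le_length_of_snd_mem (hs : IsEquilibrium α s) {u : Fin n}
    {c : (graph n s).Walk u u} (hc : c.IsCycle) (hgirth : (c.length : ℕ∞) ≤ (graph n s).egirth)
    (hbuy : c.snd ∈ s u) (hmax : ∀ x ∈ c.support, ecc (graph n s) x ≤ ecc (graph n s) u) :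
    2 * α ≤ c.length := by
  cases c with
  | nil => exact absurd hc Walk.not_isCycle_nil
  | @cons _ w _ huw p =>
  rw [Walk.snd_cons] at hbuy
  rw [Walk.length_cons] at hgirth ⊢
  obtain ⟨huz, hz⟩ := hc.edist_le_of_deleteEdges_le hgirth (deleteEdges_le_graph_update_erase u w)
  have hecc := ecc_le_ecc_add_of_edist_le huz hz
    (hmax _ (Walk.support_cons huw p ▸ List.mem_cons_of_mem _ (p.getVert_mem_support _)))
  have hα := hs.le_of_ecc_update_le (Finset.card_erase_lt_of_mem hbuy) hecc
  have : ((p.length - p.length / 2 : ℕ) : ℝ) * 2 ≤ p.length + 1 := by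
    exact_mod_cast (by omega : (p.length - p.length / 2) * 2 ≤ p.length + 1)
  push_cast
  linarith

theorem IsEquilibrium.two_mul_le_length_add_one (hs : IsEquilibrium α s) {v x y : Fin n}
    (hx : x ∈ s v) (hy : y ∈ s v) (hxy : x ≠ y) (P : (graph n s).Walk x y) (hv : v ∉ P.support) :
    2 * α ≤ P.length + 1 := by
  set L := P.length
  set z := P.getVert (L / 2)
  set t := insert z (((s v).erase x).erase y)
  have hG' := deleteIncidenceSet_le_graph_update (s := s) v t
  have hvz : (graph n (Function.update s v t)).Adj v z :=
    graph_update_adj_of_mem (Finset.mem_insert_self z _) fun h => hv (h ▸ P.getVert_mem_support _)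
  obtain ⟨hvx, hvy⟩ := edist_le_of_adj_getVert_length_div_two hv hG' hvz
  have hN : ∀ a, (graph n s).Adj v a →
      (graph n (Function.update s v t)).edist v a ≤ (L - L / 2 : ℕ) + 1 := by
    intro a hva
    by_cases hax : a = x
    · exact hax ▸ hvx
    by_cases hay : a = y
    · exact hay ▸ hvy
    refine (edist_eq_one_iff_adj.mpr ?_).le.trans le_add_self
    obtain ⟨hne, hbuy⟩ := graph_adj.mp hva
    refine graph_adj.mpr ⟨hne, hbuy.imp (fun hav => ?_) (by simp [Function.update_of_ne hne.symm])⟩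
    simp [t, hav, hax, hay]
  have hecc :=
    ecc_le_ecc_add_of_forall_edist_le (edist_le_edist_add_of_deleteIncidenceSet_le hG' hN)
  have hcard : t.card < (s v).card := by
    have h2 : (((s v).erase x).erase y).card + 2 = (s v).card := by
      rw [Finset.card_erase_of_mem (Finset.mem_erase.mpr ⟨hxy.symm, hy⟩),
        Finset.card_erase_of_mem hx]
      have : 2 ≤ (s v).card := Finset.one_lt_card.mpr ⟨x, hx, y, hy, hxy⟩
      omega
    have : t.card ≤ _ + 1 := Finset.card_insert_le z (((s v).erase x).erase y)
    omega
  have hα := hs.le_of_ecc_update_le hcard hecc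
  have : ((L - L / 2 : ℕ) : ℝ) * 2 ≤ L + 1 := by exact_mod_cast (by omega : (L - L / 2) * 2 ≤ L + 1)
  linarith

lemma exists_mem_darts_buys_both {u : Fin n} {c : (graph n s).Walk u u} (hc : ¬ c.Nil)
    (hsnd : c.snd ∉ s u) (hpen : c.penultimate ∉ s u) :
    ∃ d ∈ c.darts, ∃ d' ∈ c.darts, d.snd = d'.fst ∧ d.fst ∈ s d.snd ∧ d'.snd ∈ s d'.fst := by
  by_contra! h
  -- otherwise each dart is bought by its head, which propagates from the first dart to the last
  have hhead : ∀ d ∈ c.darts, d.fst ∈ s d.snd := by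
    refine (List.IsChain.iff_mem.mp c.isChain_dartAdj_darts).induction _ _
      (fun d d' ⟨hd, hd', hdd'⟩ hbuy => ?_) (fun hne => ?_)
    · exact (graph_adj.mp d'.adj).2.resolve_left (h d hd d' hd' hdd' hbuy)
    · rw [Walk.head_darts_eq_firstDart]
      exact (graph_adj.mp (c.adj_snd hc)).2.resolve_left hsnd
  exact hpen (hhead _ (c.lastDart_mem_darts hc))

theorem IsEquilibrium.two_mul_le_length (hs : IsEquilibrium α s) {v : Fin n}
    {c : (graph n s).Walk v v} (hc : c.IsCycle) : 2 * α ≤ c.length := by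
  classical
  obtain ⟨a, c₀, hc₀, hlen⟩ := exists_egirth_eq_length.mpr fun hacyc => hacyc c hc
  have hc₀c : c₀.length ≤ c.length := by exact_mod_cast hlen ▸ egirth_le_length hc
  suffices 2 * α ≤ c₀.length from this.trans (by exact_mod_cast hc₀c)
  obtain ⟨u, hu, hmax⟩ := c₀.support.toFinset.exists_max_image (ecc (graph n s)) ⟨a, by simp⟩
  set c₁ := c₀.rotate u (List.mem_toFinset.mp hu)
  have hc₁ : c₁.IsCycle := hc₀.rotate _
  have hlen₁ : c₁.length = c₀.length := Walk.length_rotate ..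
  have hgirth : (c₁.length : ℕ∞) ≤ (graph n s).egirth := by rw [hlen₁, hlen]
  have hmax₁ : ∀ x ∈ c₁.support, ecc (graph n s) x ≤ ecc (graph n s) u := fun x hx =>
    hmax x (List.mem_toFinset.mpr ((Walk.mem_support_rotate_iff ..).mp hx))
  rw [← hlen₁]
  by_cases hsnd : c₁.snd ∈ s u
  · exact hs.two_mul_le_length_of_snd_mem hc₁ hgirth hsnd hmax₁
  by_cases hpen : c₁.penultimate ∈ s u
  · simpa using hs.two_mul_le_length_of_snd_mem hc₁.reverse (by simpa using hgirth)
      (by rwa [Walk.snd_reverse]) (by simpa using hmax₁)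
  obtain ⟨d, hd, d', hd', hdd', hbd, hbd'⟩ := exists_mem_darts_buys_both hc₁.not_nil hsnd hpen
  have hv := c₁.dart_fst_mem_support_of_mem_darts hd'
  have hc₂ := hc₁.rotate hv
  obtain ⟨P, hP, hPlen⟩ := hc₂.exists_walk_snd_penultimate
  have := hs.two_mul_le_length_add_one (hc₁.snd_rotate hv hd' rfl ▸ hbd')
    (hc₁.penultimate_rotate hv hd hdd' ▸ hdd' ▸ hbd) hc₂.snd_ne_penultimate P hP
  rw [Walk.length_rotate] at hPlen
  have : (P.length : ℝ) + 2 = c₁.length := by exact_mod_cast hPlen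
  linarith

end NCG

theorem no_cycle_lt_two_alpha_general (n : ℕ) (α : ℝ)
    (s : Fin n → Finset (Fin n)) (hs : IsEquilibrium α s) :
    ∀ (v : Fin n) (c : (graph n s).Walk v v), c.IsCycle →
      ¬ ((c.length : ℝ) < 2 * α - 1) := by
  intro v c hc hlt
  have := hs.two_mul_le_length hc
  linarith

/-- every equilibrium graph has no cycle of length less than `2α − 1`. -/
theorem no_cycle_lt_two_alpha (n : ℕ) (α : ℝ) (hα : 0 < α)
    (s : Fin n → Finset (Fin n)) (hs : IsEquilibrium α s) :
    ∀ (v : Fin n) (c : (graph n s).Walk v v), c.IsCycle →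
      ¬ ((c.length : ℝ) < 2 * α - 1) :=
  no_cycle_lt_two_alpha_general n α s hs
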